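/- arXiv:math/0703323 — 2 statements merged into one kernel-verified Lean document; each statement's English description precedes it below -/
import Mathlib

section
/- Let L be a free ℤ-module of finite rank n, and A, B ⊆ L primitive sublattices (i.e., L/A and L/B are torsion-free). Let exp_L : L ⊗ ℂ → L ⊗ ℂ* be the map 1_L ⊗ (t ↦ e^{2πit}). If (A ⊗ ℂ) ∩ (B ⊗ ℂ) = 0 inside L ⊗ ℂ, then there is a group isomorphism Tors(L/(A+B)) ≅ exp_L(A ⊗ ℂ) ∩ exp_L(B ⊗ ℂ). -/
open Complex

/-- The exponential `t ↦ e^{2πit}` as a unit of `ℂ`. -/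
noncomputable def expu (t : ℂ) : ℂˣ :=
  Units.mk0 (Complex.exp (2 * Real.pi * Complex.I * t)) (Complex.exp_ne_zero _)

/-- The coordinatewise exponential `exp_L : ℂⁿ → (ℂ*)ⁿ` as a group homomorphism. -/
noncomputable def expL (n : ℕ) : Multiplicative (Fin n → ℂ) →* (Fin n → ℂˣ) where
  toFun t i := expu (Multiplicative.toAdd t i)
  map_one' := by
    funext i
    apply Units.ext
    simp [expu]
  map_mul' a b := by
    funext i
    apply Units.ext
    simp [expu, mul_add, Complex.exp_add]

/-- Inclusion of the lattice `ℤⁿ` into `ℂⁿ`. -/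
def zc {n : ℕ} (v : Fin n → ℤ) : Fin n → ℂ := fun i => (v i : ℂ)

/-- The complexification `A ⊗ ℂ` of a sublattice `A ⊆ ℤⁿ`, as the ℂ-span of `A` in `ℂⁿ`. -/
noncomputable def VC {n : ℕ} (A : Submodule ℤ (Fin n → ℤ)) : Submodule ℂ (Fin n → ℂ) :=
  Submodule.span ℂ (zc '' (A : Set (Fin n → ℤ)))

/-- The subtorus `exp_L(V)` of `(ℂ*)ⁿ` associated to a ℂ-subspace `V ⊆ ℂⁿ`. -/
noncomputable def expT {n : ℕ} (V : Submodule ℂ (Fin n → ℂ)) : Subgroup (Fin n → ℂˣ) :=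
  Subgroup.map (expL n) (AddSubgroup.toSubgroup V.toAddSubgroup)

/-- A sublattice `A ⊆ ℤⁿ` is primitive if `ℤⁿ/A` is torsion-free. -/
def IsPrimitive {n : ℕ} (A : Submodule ℤ (Fin n → ℤ)) : Prop :=
  ∀ (m : ℤ) (x : Fin n → ℤ), m ≠ 0 → m • x ∈ A → x ∈ A

/-!
Write `V_A = A ⊗ ℂ` and `V_B = B ⊗ ℂ`. As `V_A ∩ V_B = 0`, some linear map `π` satisfies
`π (a + b) = a` for `a ∈ V_A`, `b ∈ V_B`. The torsion of `L/(A+B)` consists of the classes of the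
`x ∈ L` lying in `V_A + V_B`, and `x ↦ exp_L (π x)` maps it onto `exp_L(V_A) ∩ exp_L(V_B)`: for
`x = a + b` we get `exp_L a = exp_L (-b)`, and conversely `exp_L a = exp_L b` forces `a - b ∈ L`.
The map is injective because `ker exp_L = L`, while primitivity gives `L ∩ V_A = A` and
`L ∩ V_B = B`.
-/

open Submodule
open scoped nonZeroDivisors

namespace Submodule

/-- A `K`-linear retraction `L → K`, applied coordinatewise, turns `L`-combinations of vectors
with entries in `K` into `K`-combinations of the same vectors. -/
theorem mem_span_of_algebraMap_comp_mem_span {K L ι : Type*} [Field K] [Ring L] [Nontrivial L]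
    [Algebra K L] {s : Set (ι → K)} {x : ι → K}
    (hx : algebraMap K L ∘ x ∈ span L ((algebraMap K L ∘ ·) '' s)) : x ∈ span K s := by
  obtain ⟨g, hg⟩ := (Algebra.linearMap K L).exists_leftInverse_of_injective
    (LinearMap.ker_eq_bot.mpr (algebraMap K L).injective)
  have hg' (a : K) : g (algebraMap K L a) = a := LinearMap.congr_fun hg a
  have key : ∀ y ∈ span L ((algebraMap K L ∘ ·) '' s), ∀ c : L,
      g.compLeft ι (c • y) ∈ span K s := by
    intro y hy
    induction hy using Submodule.span_induction with
    | mem y hy =>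
      obtain ⟨t, ht, rfl⟩ := hy
      intro c
      have : g.compLeft ι (c • (algebraMap K L ∘ t)) = g c • t := by
        funext i
        simp [LinearMap.compLeft_apply, ← Algebra.commutes, ← Algebra.smul_def, mul_comm]
      rw [this]
      exact smul_mem _ _ (subset_span ht)
    | zero => simp
    | add y z _ _ hy hz => intro c; rw [smul_add, map_add]; exact add_mem (hy c) (hz c)
    | smul d y _ hy => intro c; rw [smul_smul]; exact hy _
  convert key _ hx 1
  funext i
  simp [LinearMap.compLeft_apply, hg']

theorem exists_smul_mem_of_algebraMap_comp_mem_span {R K ι : Type*} [CommRing R] [Field K]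
    [Algebra R K] [IsFractionRing R K] {C : Submodule R (ι → R)} {x : ι → R}
    (hx : algebraMap R K ∘ x ∈ span K ((algebraMap R K ∘ ·) '' C)) :
    ∃ m : R⁰, (m : R) • x ∈ C := by
  set f := (Algebra.linearMap R K).compLeft ι
  have hf : Function.Injective f := fun u v huv =>
    funext fun i => IsFractionRing.injective R K (congrFun huv i)
  obtain ⟨y, hy, m, hxy⟩ := (IsLocalization.mem_span_iff R⁰).mp hx
  rw [show (algebraMap R K ∘ ·) = f from rfl, span_image, span_eq] at hy
  obtain ⟨c, hc, rfl⟩ := hy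
  suffices (m : R) • x = c from ⟨m, this ▸ hc⟩
  apply hf
  have hm : (m : R) • IsLocalization.mk' K (1 : R) m = 1 := by
    rw [Algebra.smul_def, IsLocalization.mk'_spec', map_one]
  rw [map_smul, show f x = algebraMap R K ∘ x from rfl, hxy, ← smul_assoc, hm, one_smul]

theorem exists_linearMap_add_eq_left_of_disjoint {K V : Type*} [DivisionRing K]
    [AddCommGroup V] [Module K V] {P Q : Submodule K V} (h : Disjoint P Q) :
    ∃ π : V →ₗ[K] V, ∀ a ∈ P, ∀ b ∈ Q, π (a + b) = a := by
  have hinj : (P.subtype.coprod Q.subtype).ker = ⊥ := by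
    rw [LinearMap.ker_coprod_of_disjoint_range _ _ (by simpa using h)]
    simp
  obtain ⟨g, hg⟩ := LinearMap.exists_leftInverse_of_injective _ hinj
  refine ⟨P.subtype ∘ₗ LinearMap.fst K P Q ∘ₗ g, fun a ha b hb => ?_⟩
  have hab : g (a + b) = (⟨a, ha⟩, ⟨b, hb⟩) := LinearMap.congr_fun hg (⟨a, ha⟩, ⟨b, hb⟩)
  rw [LinearMap.comp_apply, LinearMap.comp_apply, hab]
  rfl

end Submodule

variable {n : ℕ}

lemma zc_eq_comp : (zc : (Fin n → ℤ) → Fin n → ℂ) =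
    (algebraMap ℚ ℂ ∘ ·) ∘ (algebraMap ℤ ℚ ∘ ·) := by
  funext v i
  simp [zc]

lemma zc_add (u v : Fin n → ℤ) : zc (u + v) = zc u + zc v := by
  funext i; simp [zc]

lemma zc_sub (u v : Fin n → ℤ) : zc (u - v) = zc u - zc v := by
  funext i; simp [zc]

lemma zc_smul (m : ℤ) (v : Fin n → ℤ) : zc (m • v) = (m : ℂ) • zc v := by
  funext i; simp [zc]

lemma zc_mem_VC {C : Submodule ℤ (Fin n → ℤ)} {x : Fin n → ℤ} (hx : x ∈ C) : zc x ∈ VC C :=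
  subset_span ⟨x, hx, rfl⟩

lemma VC_mono {C D : Submodule ℤ (Fin n → ℤ)} (h : C ≤ D) : VC C ≤ VC D :=
  span_mono (Set.image_mono h)

lemma zc_mem_VC_iff {C : Submodule ℤ (Fin n → ℤ)} {x : Fin n → ℤ} :
    zc x ∈ VC C ↔ ∃ m : ℤ⁰, (m : ℤ) • x ∈ C := by
  constructor
  · intro hx
    rw [VC, zc_eq_comp, Set.image_comp] at hx
    exact exists_smul_mem_of_algebraMap_comp_mem_span (mem_span_of_algebraMap_comp_mem_span hx)
  · rintro ⟨m, hm⟩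
    have := zc_mem_VC hm
    rwa [zc_smul, smul_mem_iff _ (by exact_mod_cast nonZeroDivisors.coe_ne_zero m)] at this

lemma IsPrimitive.zc_mem_VC_iff {C : Submodule ℤ (Fin n → ℤ)} (hC : IsPrimitive C)
    {x : Fin n → ℤ} : zc x ∈ VC C ↔ x ∈ C := by
  rw [_root_.zc_mem_VC_iff]
  exact ⟨fun ⟨m, hm⟩ => hC m x (nonZeroDivisors.coe_ne_zero m) hm, fun hx => ⟨1, by simpa⟩⟩

lemma mk_mem_torsion_iff {C : Submodule ℤ (Fin n → ℤ)} {x : Fin n → ℤ} :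
    C.mkQ x ∈ torsion ℤ ((Fin n → ℤ) ⧸ C) ↔ zc x ∈ VC C := by
  simp only [mem_torsion_iff, zc_mem_VC_iff, Submonoid.smul_def, mkQ_apply, ← Quotient.mk_smul,
    Quotient.mk_eq_zero]

lemma VC_sup (A B : Submodule ℤ (Fin n → ℤ)) : VC (A ⊔ B) = VC A ⊔ VC B := by
  refine le_antisymm (span_le.mpr ?_) (sup_le (VC_mono le_sup_left) (VC_mono le_sup_right))
  rintro _ ⟨v, hv, rfl⟩
  obtain ⟨a, ha, b, hb, rfl⟩ := mem_sup.mp hv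
  rw [SetLike.mem_coe, zc_add]
  exact add_mem (mem_sup_left (zc_mem_VC ha)) (mem_sup_right (zc_mem_VC hb))

lemma expu_eq_one_iff (t : ℂ) : expu t = 1 ↔ ∃ k : ℤ, (k : ℂ) = t := by
  rw [Units.ext_iff, expu, Units.val_mk0, Units.val_one, Complex.exp_eq_one_iff]
  have h : 2 * (Real.pi : ℂ) * Complex.I ≠ 0 := by simp [Real.pi_ne_zero]
  refine exists_congr fun k => ⟨fun hk => mul_left_cancel₀ h ?_, fun hk => ?_⟩
  · rw [hk]; ring
  · rw [← hk]; ring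

lemma expL_ofAdd_eq_one_iff (v : Fin n → ℂ) :
    expL n (Multiplicative.ofAdd v) = 1 ↔ ∃ w, zc w = v := by
  simp only [funext_iff, zc]
  exact (forall_congr' fun i => expu_eq_one_iff (v i)).trans Classical.skolem

lemma expL_ofAdd_eq_iff (u v : Fin n → ℂ) :
    expL n (Multiplicative.ofAdd u) = expL n (Multiplicative.ofAdd v) ↔ ∃ w, zc w = u - v := by
  rw [← div_eq_one, ← map_div, ← ofAdd_sub, expL_ofAdd_eq_one_iff]

lemma mem_expT {V : Submodule ℂ (Fin n → ℂ)} {u : Fin n → ℂˣ} :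
    u ∈ expT V ↔ ∃ v ∈ V, expL n (Multiplicative.ofAdd v) = u :=
  Subgroup.mem_map

section TorsionExp

variable {A B : Submodule ℤ (Fin n → ℤ)} {π : (Fin n → ℂ) →ₗ[ℂ] (Fin n → ℂ)}

noncomputable def expProj (π : (Fin n → ℂ) →ₗ[ℂ] (Fin n → ℂ)) :
    (Fin n → ℤ) →+ Additive (Fin n → ℂˣ) :=
  AddMonoidHom.mk' (fun x => .ofMul (expL n (.ofAdd (π (zc x))))) fun x y => by
    rw [zc_add, map_add, ofAdd_add, map_mul, ofMul_mul]

lemma sup_le_ker_expProj (hπ : ∀ a ∈ VC A, ∀ b ∈ VC B, π (a + b) = a) :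
    A ⊔ B ≤ LinearMap.ker (expProj π).toIntLinearMap := by
  intro x hx
  obtain ⟨a, ha, b, hb, rfl⟩ := mem_sup.mp hx
  rw [LinearMap.mem_ker, AddMonoidHom.coe_toIntLinearMap, expProj, AddMonoidHom.mk'_apply, zc_add,
    hπ _ (zc_mem_VC ha) _ (zc_mem_VC hb), ofMul_eq_zero, expL_ofAdd_eq_one_iff]
  exact ⟨a, rfl⟩

noncomputable def torsionExp (hπ : ∀ a ∈ VC A, ∀ b ∈ VC B, π (a + b) = a) :
    Multiplicative (torsion ℤ ((Fin n → ℤ) ⧸ (A ⊔ B))) →* (Fin n → ℂˣ) :=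
  AddMonoidHom.toMultiplicativeLeft
    ((A ⊔ B).liftQ _ (sup_le_ker_expProj hπ) ∘ₗ (torsion ℤ _).subtype).toAddMonoidHom

lemma torsionExp_mk (hπ : ∀ a ∈ VC A, ∀ b ∈ VC B, π (a + b) = a) (x : Fin n → ℤ)
    (hx : (A ⊔ B).mkQ x ∈ torsion ℤ ((Fin n → ℤ) ⧸ (A ⊔ B))) :
    torsionExp hπ (.ofAdd ⟨_, hx⟩) = expL n (.ofAdd (π (zc x))) :=
  rfl

theorem torsionExp_injective (hA : IsPrimitive A) (hB : IsPrimitive B)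
    (hπ : ∀ a ∈ VC A, ∀ b ∈ VC B, π (a + b) = a) : Function.Injective (torsionExp hπ) := by
  refine (injective_iff_map_eq_one _).mpr ?_
  intro q h
  obtain ⟨⟨q, hq⟩, rfl⟩ := Multiplicative.ofAdd.surjective q
  obtain ⟨x, rfl⟩ := (A ⊔ B).mkQ_surjective q
  obtain ⟨a, ha, b, hb, hab⟩ := mem_sup.mp (VC_sup A B ▸ mk_mem_torsion_iff.mp hq)
  rw [torsionExp_mk, ← hab, hπ a ha b hb, expL_ofAdd_eq_one_iff] at h
  obtain ⟨w, rfl⟩ := h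
  have hxw : x - w ∈ B := hB.zc_mem_VC_iff.mp (by rwa [zc_sub, ← hab, add_sub_cancel_left])
  have hx : x ∈ A ⊔ B := by
    simpa using add_mem (mem_sup_left (hA.zc_mem_VC_iff.mp ha)) (mem_sup_right hxw)
  exact congrArg Multiplicative.ofAdd (Subtype.ext ((Quotient.mk_eq_zero _).mpr hx))

theorem range_torsionExp (hπ : ∀ a ∈ VC A, ∀ b ∈ VC B, π (a + b) = a) :
    (torsionExp hπ).range = expT (VC A) ⊓ expT (VC B) := by
  ext u
  simp only [MonoidHom.mem_range, Subgroup.mem_inf, mem_expT]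
  constructor
  · rintro ⟨q, rfl⟩
    obtain ⟨⟨q, hq⟩, rfl⟩ := Multiplicative.ofAdd.surjective q
    obtain ⟨x, rfl⟩ := (A ⊔ B).mkQ_surjective q
    obtain ⟨a, ha, b, hb, hab⟩ := mem_sup.mp (VC_sup A B ▸ mk_mem_torsion_iff.mp hq)
    rw [torsionExp_mk, ← hab, hπ a ha b hb]
    refine ⟨⟨a, ha, rfl⟩, -b, neg_mem hb, ((expL_ofAdd_eq_iff _ _).mpr ⟨x, ?_⟩).symm⟩
    rw [sub_neg_eq_add, hab]
  · rintro ⟨⟨a, ha, rfl⟩, b, hb, hba⟩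
    obtain ⟨x, hx⟩ := (expL_ofAdd_eq_iff _ _).mp hba.symm
    have hq : (A ⊔ B).mkQ x ∈ torsion ℤ ((Fin n → ℤ) ⧸ (A ⊔ B)) := by
      rw [mk_mem_torsion_iff, VC_sup, hx]
      exact sub_mem (mem_sup_left ha) (mem_sup_right hb)
    refine ⟨.ofAdd ⟨_, hq⟩, ?_⟩
    rw [torsionExp_mk, hx, sub_eq_add_neg, hπ a ha (-b) (neg_mem hb)]

end TorsionExp

/-- **Theorem 1.** If `A, B ⊆ ℤⁿ` are primitive sublattices with `(A⊗ℂ) ∩ (B⊗ℂ) = 0`,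
then there is a group isomorphism `Tors(L/(A+B)) ≅ exp_L(A⊗ℂ) ∩ exp_L(B⊗ℂ)`. -/
theorem stmt_0 (n : ℕ) (A B : Submodule ℤ (Fin n → ℤ))
    (hA : IsPrimitive A) (hB : IsPrimitive B)
    (hAB : VC A ⊓ VC B = ⊥) :
    Nonempty (Multiplicative (Submodule.torsion ℤ ((Fin n → ℤ) ⧸ (A ⊔ B))) ≃*
      (expT (VC A) ⊓ expT (VC B) : Subgroup (Fin n → ℂˣ))) := by
  obtain ⟨π, hπ⟩ := exists_linearMap_add_eq_left_of_disjoint (disjoint_iff.mpr hAB)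
  exact ⟨(MonoidHom.ofInjective (torsionExp_injective hA hB hπ)).trans
    (MulEquiv.subgroupCongr (range_torsionExp hπ))⟩
end

section
/- Let T = (ℂ*)^n and let W_1 = ρ_1·S_1 and W_2 = ρ_2·S_2 be translates of algebraic subtori S_1, S_2 ⊆ T by finite-order elements ρ_1, ρ_2 ∈ T. If S_1 ∩ S_2 is finite, then every element of W_1 ∩ W_2 has finite order in T. -/
open Complex Pointwise

/-- Let `W₁ = ρ₁·S₁` and `W₂ = ρ₂·S₂` be translates of algebraic subtori
`S₁, S₂ ⊆ (ℂ*)ⁿ` (given as `Sᵢ = exp_L(Aᵢ ⊗ ℂ)` for primitive sublattices `Aᵢ ⊆ ℤⁿ`)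
by finite-order elements `ρ₁, ρ₂`. If `S₁ ∩ S₂` is finite, then every element of
`W₁ ∩ W₂` has finite order. -/
theorem stmt_9 (n : ℕ) (A B : Submodule ℤ (Fin n → ℤ))
    (hA : IsPrimitive A) (hB : IsPrimitive B)
    (ρ₁ ρ₂ : Fin n → ℂˣ) (hρ₁ : IsOfFinOrder ρ₁) (hρ₂ : IsOfFinOrder ρ₂)
    (hfin : ((expT (VC A) ⊓ expT (VC B) : Subgroup (Fin n → ℂˣ)) :
      Set (Fin n → ℂˣ)).Finite) :
    ∀ x ∈ (ρ₁ • (expT (VC A) : Set (Fin n → ℂˣ))) ∩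
        (ρ₂ • (expT (VC B) : Set (Fin n → ℂˣ))), IsOfFinOrder x := by
  have hsm : ∀ a b : Fin n → ℂˣ, a • b = a * b := by
    intro a b; funext i; ext; simp [Units.smul_def]
  rintro x ⟨hx1, hx2⟩
  obtain ⟨s₁, hs₁, rfl⟩ := hx1
  obtain ⟨s₂, hs₂, hx2'⟩ := hx2
  set m : ℕ := orderOf ρ₁ * orderOf ρ₂ with hm
  have hm0 : m ≠ 0 := Nat.mul_ne_zero hρ₁.orderOf_pos.ne' hρ₂.orderOf_pos.ne'
  have hρ₁m : ρ₁ ^ m = 1 := orderOf_dvd_iff_pow_eq_one.mp (dvd_mul_right _ _)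
  have hρ₂m : ρ₂ ^ m = 1 := orderOf_dvd_iff_pow_eq_one.mp (dvd_mul_left _ _)
  have key : (ρ₁ • s₁) ^ m ∈ (expT (VC A) ⊓ expT (VC B) : Subgroup (Fin n → ℂˣ)) := by
    constructor
    · have : (ρ₁ • s₁) ^ m = s₁ ^ m := by
        rw [hsm, mul_pow, hρ₁m, one_mul]
      rw [this]; exact pow_mem hs₁ m
    · have : (ρ₁ • s₁) ^ m = s₂ ^ m := by
        have h : (ρ₁ • s₁ : Fin n → ℂˣ) = ρ₂ • s₂ := hx2'.symm
        rw [h, hsm, mul_pow, hρ₂m, one_mul]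
      rw [this]; exact pow_mem hs₂ m
  haveI : Finite ((expT (VC A) ⊓ expT (VC B) : Subgroup (Fin n → ℂˣ))) := hfin.to_subtype
  have hfo : IsOfFinOrder ((ρ₁ • s₁) ^ m) := by
    have := isOfFinOrder_of_finite
      (⟨(ρ₁ • s₁) ^ m, key⟩ : (expT (VC A) ⊓ expT (VC B) : Subgroup (Fin n → ℂˣ)))
    exact (Subgroup.subtype _).isOfFinOrder this
  exact hfo.of_pow hm0
end
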